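/- arXiv:2511.21112 — 2 statements merged into one kernel-verified Lean document; each statement's English description precedes it below -/
import Mathlib

section
/- For any finite simple graph G with exactly f full vertices that admits at least one coalition partition, the coalition count satisfies c(G) ≥ ⌈(C(G) − f)/2⌉, where C(G) is the coalition number of G. -/
open scoped Classical

/-- A dominating set (as a finset): every vertex outside `S` has a neighbor in `S`. -/
def IsDomSet {V : Type*} (G : SimpleGraph V) (S : Finset V) : Prop :=
  ∀ v, v ∉ S → ∃ u ∈ S, G.Adj u v

/-- Two (distinct) sets form a coalition: neither dominates, but their union does. -/
def IsCoalition {V : Type*} (G : SimpleGraph V) (A B : Finset V) : Prop :=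
  A ≠ B ∧ ¬ IsDomSet G A ∧ ¬ IsDomSet G B ∧ IsDomSet G (A ∪ B)

/-- A coalition partition (c-partition) of the vertex set of `G`. -/
def IsCPartition {V : Type*} [Fintype V] (G : SimpleGraph V) (π : Finset (Finset V)) : Prop :=
  (∀ A ∈ π, A.Nonempty) ∧
  (∀ A ∈ π, ∀ B ∈ π, A ≠ B → Disjoint A B) ∧
  (∀ v : V, ∃ A ∈ π, v ∈ A) ∧
  (∀ A ∈ π, (∃ v, A = {v} ∧ IsDomSet G A) ∨ ∃ B ∈ π, IsCoalition G A B)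

/-- Number of distinct (unordered) coalitions in the partition `π`. -/
noncomputable def cpCount {V : Type*} [Fintype V] (G : SimpleGraph V)
    (π : Finset (Finset V)) : ℕ :=
  ((π ×ˢ π).filter (fun p => IsCoalition G p.1 p.2)).card / 2

/-- The coalition count `c(G)`: maximum number of distinct coalitions over c-partitions. -/
noncomputable def coalitionCount {V : Type*} [Fintype V] (G : SimpleGraph V) : ℕ :=
  sSup {k | ∃ π, IsCPartition G π ∧ k = cpCount G π}

/-- The coalition number `C(G)`: maximum order of a c-partition. -/
noncomputable def coalitionNumber {V : Type*} [Fintype V] (G : SimpleGraph V) : ℕ :=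
  sSup {k | ∃ π, IsCPartition G π ∧ k = π.card}

/-- The coalition graph `CG(G, π)`. -/
def coalitionGraph {V : Type*} (G : SimpleGraph V) (π : Finset (Finset V)) :
    SimpleGraph {A // A ∈ π} where
  Adj A B := IsCoalition G A.1 B.1
  symm := by
    constructor
    rintro A B ⟨h1, h2, h3, h4⟩
    exact ⟨fun h => h1 h.symm, h3, h2, by rwa [Finset.union_comm]⟩
  loopless := by
    constructor
    rintro A ⟨h1, -⟩
    exact h1 rfl

/-- The set of full vertices (vertices of degree `n - 1`). -/
noncomputable def fullVertices {V : Type*} [Fintype V] (G : SimpleGraph V) : Finset V :=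
  Finset.univ.filter (fun v => G.degree v = Fintype.card V - 1)

/-- The domatic number: maximum order of a partition into dominating sets. -/
noncomputable def domaticNumber {V : Type*} [Fintype V] (G : SimpleGraph V) : ℕ :=
  sSup {k | ∃ P : Finset (Finset V),
    (∀ A ∈ P, A.Nonempty) ∧
    (∀ A ∈ P, ∀ B ∈ P, A ≠ B → Disjoint A B) ∧
    (∀ v : V, ∃ A ∈ P, v ∈ A) ∧
    (∀ A ∈ P, IsDomSet G A) ∧ k = P.card}

/-- The independence number of `G`. -/
noncomputable def indepNumber {V : Type*} [Fintype V] (G : SimpleGraph V) : ℕ :=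
  sSup {k | ∃ s : Finset V, (∀ a ∈ s, ∀ b ∈ s, ¬ G.Adj a b) ∧ k = s.card}

/-!
Take a c-partition `π` of maximum order `C(G)`. A singleton dominating set `{v}` forces `v` to be
a full vertex, so at most `f` members of `π` are of that kind; every other member lies in some
coalition. Each coalition involves only two members of `π`, so there are at least
`⌈(C(G) - f) / 2⌉` of them.
-/

theorem Finset.even_card_of_involution {α : Type*} {s : Finset α} (g : α → α)
    (hg_mem : ∀ a ∈ s, g a ∈ s) (hg_ne : ∀ a ∈ s, g a ≠ a)
    (hg_inv : ∀ a ∈ s, g (g a) = a) : Even s.card := by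
  rw [← ZMod.natCast_eq_zero_iff_even, Finset.card_eq_sum_ones, Nat.cast_sum, Nat.cast_one]
  exact Finset.sum_involution (fun a _ => g a) (fun _ _ => rfl) (fun a ha _ => hg_ne a ha)
    hg_mem hg_inv

theorem bddAbove_setOf_exists_eq {α : Type*} [Finite α] (P : α → Prop) (g : α → ℕ) :
    BddAbove {k | ∃ a, P a ∧ k = g a} :=
  ((Set.finite_range g).subset (by rintro _ ⟨a, -, rfl⟩; exact ⟨a, rfl⟩)).bddAbove

section Coalitions

variable {V : Type*} {G : SimpleGraph V}

theorem IsCoalition.symm {A B : Finset V} (h : IsCoalition G A B) : IsCoalition G B A := by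
  obtain ⟨hne, hA, hB, hAB⟩ := h
  exact ⟨hne.symm, hB, hA, Finset.union_comm A B ▸ hAB⟩

theorem even_card_filter_isCoalition (π : Finset (Finset V)) :
    Even ((π ×ˢ π).filter (fun p => IsCoalition G p.1 p.2)).card := by
  refine Finset.even_card_of_involution Prod.swap (fun p hp => ?_) (fun p hp => ?_)
    (fun p _ => p.swap_swap)
  · simp only [Finset.mem_filter, Finset.mem_product] at hp ⊢
    exact ⟨hp.1.symm, hp.2.symm⟩
  · exact fun hswap => (Finset.mem_filter.1 hp).2.1 (congrArg Prod.snd hswap)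

theorem mem_fullVertices_of_isDomSet_singleton [Fintype V] {v : V}
    (h : IsDomSet G {v}) : v ∈ fullVertices G := by
  have hnbr : G.neighborFinset v = Finset.univ.erase v := by
    ext u
    simp only [SimpleGraph.mem_neighborFinset, Finset.mem_erase, Finset.mem_univ, and_true]
    refine ⟨fun hadj => hadj.ne', fun hu => ?_⟩
    obtain ⟨w, hw, hadj⟩ := h u (by simpa using hu)
    rwa [Finset.mem_singleton.1 hw] at hadj
  rw [fullVertices, Finset.mem_filter, ← G.card_neighborFinset_eq_degree, hnbr,
    Finset.card_erase_of_mem (Finset.mem_univ v), Finset.card_univ]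
  exact ⟨Finset.mem_univ v, rfl⟩

variable [Fintype V]

theorem IsCPartition.card_le_card_fullVertices_add_two_mul_cpCount {π : Finset (Finset V)}
    (hπ : IsCPartition G π) : π.card ≤ (fullVertices G).card + 2 * cpCount G π := by
  set E := (π ×ˢ π).filter (fun p => IsCoalition G p.1 p.2)
  have hsplit : π ⊆ (fullVertices G).image ({·}) ∪ E.image Prod.fst := by
    intro A hA
    rcases hπ.2.2.2 A hA with ⟨v, rfl, hdom⟩ | ⟨B, hB, hAB⟩
    · exact Finset.mem_union_left _
        (Finset.mem_image_of_mem _ (mem_fullVertices_of_isDomSet_singleton hdom))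
    · exact Finset.mem_union_right _
        (Finset.mem_image.2 ⟨(A, B), by simp [E, hA, hB, hAB], rfl⟩)
  have hE : E.card = 2 * cpCount G π := by
    obtain ⟨k, hk⟩ := even_card_filter_isCoalition (G := G) π
    simp only [cpCount, E] at hk ⊢
    omega
  calc π.card ≤ ((fullVertices G).image ({·}) ∪ E.image Prod.fst).card :=
        Finset.card_le_card hsplit
    _ ≤ (fullVertices G).card + E.card :=
      (Finset.card_union_le _ _).trans (add_le_add Finset.card_image_le Finset.card_image_le)
    _ = (fullVertices G).card + 2 * cpCount G π := by rw [hE]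

theorem IsCPartition.cpCount_le_coalitionCount {π : Finset (Finset V)} (hπ : IsCPartition G π) :
    cpCount G π ≤ coalitionCount G :=
  le_csSup (bddAbove_setOf_exists_eq _ _) ⟨π, hπ, rfl⟩

theorem exists_isCPartition_card_eq_coalitionNumber (hex : ∃ π, IsCPartition G π) :
    ∃ π, IsCPartition G π ∧ coalitionNumber G = π.card := by
  obtain ⟨π, hπ⟩ := hex
  exact Nat.sSup_mem (s := {k | ∃ π, IsCPartition G π ∧ k = π.card})
    ⟨π.card, π, hπ, rfl⟩ (bddAbove_setOf_exists_eq _ _)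

end Coalitions

/-- For any graph `G` with exactly `f` full vertices admitting a coalition
partition, `c(G) ≥ ⌈(C(G) - f) / 2⌉`. -/
theorem stmt_9 {V : Type} [Fintype V] (G : SimpleGraph V) (f : ℕ)
    (hf : (fullVertices G).card = f)
    (hex : ∃ π, IsCPartition G π) :
    (coalitionNumber G - f + 1) / 2 ≤ coalitionCount G := by
  obtain ⟨π, hπ, hC⟩ := exists_isCPartition_card_eq_coalitionNumber hex
  have hcard := hπ.card_le_card_fullVertices_add_two_mul_cpCount
  have hcount := hπ.cpCount_le_coalitionCount
  omega
end

section
/- The path P_4 on four vertices satisfies c(P_4) = 4 and C(P_4) = 4; that is, its coalition count and coalition number both equal 4. -/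
open scoped Classical

/-
In `P_4 = 0 - 1 - 2 - 3` no single vertex dominates, while the pairs `{0, 2}`, `{0, 3}`, `{1, 2}`,
`{1, 3}` do, so the partition into singletons is a c-partition with four parts and four coalitions.
In general a c-partition has at most `|V|` parts, with equality only for the singleton partition;
any other c-partition of `P_4` has at most three parts, hence at most `choose 3 2 = 3` coalitions.
-/

open Finset

section CPartition

variable {V : Type*} [Fintype V] {G : SimpleGraph V} {π : Finset (Finset V)}

def singletonPartition (V : Type*) [Fintype V] : Finset (Finset V) :=
  univ.map ⟨singleton, singleton_injective⟩

theorem card_singletonPartition : (singletonPartition V).card = Fintype.card V := by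
  simp [singletonPartition]

theorem IsCPartition.sum_card_eq (h : IsCPartition G π) : ∑ A ∈ π, A.card = Fintype.card V := by
  rw [← card_biUnion h.2.1, ← card_univ]
  congr
  exact eq_univ_of_forall fun v => mem_biUnion.2 (h.2.2.1 v)

theorem IsCPartition.card_le (h : IsCPartition G π) : π.card ≤ Fintype.card V := by
  rw [← h.sum_card_eq, card_eq_sum_ones]
  exact sum_le_sum fun A hA => card_pos.2 (h.1 A hA)

theorem IsCPartition.eq_singletonPartition (h : IsCPartition G π)
    (hcard : π.card = Fintype.card V) :
    π = singletonPartition V := by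
  have hsingle : ∀ A ∈ π, A.card = 1 := by
    by_contra! ⟨A, hA, hA1⟩
    have : ∑ _A ∈ π, 1 < ∑ A ∈ π, A.card :=
      sum_lt_sum (fun A hA => card_pos.2 (h.1 A hA))
        ⟨A, hA, lt_of_le_of_ne (card_pos.2 (h.1 A hA)) (Ne.symm hA1)⟩
    rw [← card_eq_sum_ones, h.sum_card_eq, hcard] at this
    exact this.false
  refine eq_of_subset_of_card_le (fun A hA => ?_) (by rw [hcard, card_singletonPartition])
  obtain ⟨v, rfl⟩ := card_eq_one.1 (hsingle A hA)
  simp [singletonPartition]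

theorem cpCount_le_choose_two (G : SimpleGraph V) (π : Finset (Finset V)) :
    cpCount G π ≤ π.card.choose 2 := by
  rw [Nat.choose_two_right, cpCount, Nat.mul_sub_one, ← offDiag_card]
  refine Nat.div_le_div_right (card_le_card fun p hp => ?_)
  obtain ⟨hp, hne, -⟩ := mem_filter.1 hp
  exact mem_offDiag.2 ⟨(mem_product.1 hp).1, (mem_product.1 hp).2, hne⟩

theorem IsCPartition.cpCount_le (h : IsCPartition G π) :
    cpCount G π ≤ max (cpCount G (singletonPartition V)) ((Fintype.card V - 1).choose 2) := by
  rcases h.card_le.eq_or_lt with hcard | hlt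
  · exact h.eq_singletonPartition hcard ▸ le_max_left _ _
  · exact (cpCount_le_choose_two G π).trans
      ((Nat.choose_le_choose 2 (Nat.le_sub_one_of_lt hlt)).trans (le_max_right _ _))

end CPartition

section Decidable

variable {V : Type*} [DecidableEq V] {G : SimpleGraph V}

/- `IsCoalition` and `cpCount` were elaborated under `open scoped Classical`; restating them with
the computable instances below lets `decide` evaluate them on a concrete graph. -/
theorem isCoalition_iff {A B : Finset V} : IsCoalition G A B ↔
    A ≠ B ∧ ¬IsDomSet G A ∧ ¬IsDomSet G B ∧ IsDomSet G (A ∪ B) := by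
  unfold IsCoalition
  convert Iff.rfl

instance [Fintype V] [DecidableRel G.Adj] : DecidablePred (IsDomSet G) := fun S =>
  inferInstanceAs (Decidable (∀ v, v ∉ S → ∃ u ∈ S, G.Adj u v))

instance [Fintype V] [DecidableRel G.Adj] (A B : Finset V) : Decidable (IsCoalition G A B) :=
  decidable_of_iff _ isCoalition_iff.symm

theorem cpCount_eq_card_filter [Fintype V] [DecidableRel G.Adj] (π : Finset (Finset V)) :
    cpCount G π = ((π ×ˢ π).filter fun p => IsCoalition G p.1 p.2).card / 2 := by
  unfold cpCount
  congr

end Decidable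

instance (n : ℕ) : DecidableRel (SimpleGraph.pathGraph n).Adj := fun _ _ =>
  decidable_of_iff _ SimpleGraph.pathGraph_adj.symm

theorem isCPartition_pathGraph_four_singletonPartition :
    IsCPartition (SimpleGraph.pathGraph 4) (singletonPartition (Fin 4)) := by
  refine ⟨?_, ?_, ?_, ?_⟩ <;> decide

theorem cpCount_pathGraph_four_singletonPartition :
    cpCount (SimpleGraph.pathGraph 4) (singletonPartition (Fin 4)) = 4 := by
  rw [cpCount_eq_card_filter]
  decide

/-- The path `P_4` satisfies `c(P_4) = 4` and `C(P_4) = 4`. -/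
theorem stmt_16 :
    coalitionCount (SimpleGraph.pathGraph 4) = 4 ∧
    coalitionNumber (SimpleGraph.pathGraph 4) = 4 := by
  have hπ := isCPartition_pathGraph_four_singletonPartition
  constructor
  · refine IsGreatest.csSup_eq ⟨⟨_, hπ, cpCount_pathGraph_four_singletonPartition.symm⟩, ?_⟩
    rintro _ ⟨π, h, rfl⟩
    simpa [cpCount_pathGraph_four_singletonPartition] using h.cpCount_le
  · refine IsGreatest.csSup_eq ⟨⟨_, hπ, by simp [card_singletonPartition]⟩, ?_⟩
    rintro _ ⟨π, h, rfl⟩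
    simpa using h.card_le
end
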